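/- arXiv:1809.08813 — 3 statements merged into one kernel-verified Lean document; each statement's English description precedes it below -/
import Mathlib

section
/- Let A be a positive normalized linear functional on L, let f ∈ C^n([a,b]) with n ≥ 2, and let g ∈ L with f∘g ∈ L. Then LR(f,g,a,b,A) = Σ_{k=2}^{n-1} f[a; b,…,b (k times)] · A[(g−a1)(g−b1)^{k−1}] + A(R_1(g)), where R_1(t) = (t−a)(t−b)^{n−1} · f[t; a; b,…,b ((n−1) times)]. -/
/-- Divided difference of `f` at a (sorted) list of points, with repeated points
handled via derivatives (taken within the set `s`). -/
noncomputable def divDiff (s : Set ℝ) (f : ℝ → ℝ) : List ℝ → ℝ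
  | [] => 0
  | [x] => f x
  | x :: y :: l =>
    if x = (y :: l).getLast (List.cons_ne_nil y l) then
      iteratedDerivWithin (l.length + 1) f s x / Nat.factorial (l.length + 1)
    else
      (divDiff s f (y :: l) - divDiff s f (x :: (y :: l).dropLast)) /
        ((y :: l).getLast (List.cons_ne_nil y l) - x)
termination_by l => l.length
decreasing_by
  all_goals simp [List.length_dropLast]

/-!
Newton's recursion for divided differences at the nodes `a, b, …, b` gives, for every `x`,
the Hermite expansion
`f x = f a + ∑_{k=1}^{j} f[a; b^k] (x - a)(x - b)^(k-1) + (x - a)(x - b)^j f[a; x; b^j]`.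
It is an algebraic identity: the repeated-node values `f[b^k]` only enter through the
recursion, so no smoothness of `f` is needed. Evaluating it at `x = g t` and applying the
linear functional `A`, normalized by `A 1 = 1`, gives the identity for `LR(f, g, a, b, A)`.
-/

section DividedDifferences

variable (s : Set ℝ) (f : ℝ → ℝ)

@[simp]
theorem divDiff_singleton (x : ℝ) : divDiff s f [x] = f x := by
  rw [divDiff]

theorem sub_mul_divDiff_cons_concat {x z : ℝ} (hxz : x ≠ z) (l : List ℝ) :
    (z - x) * divDiff s f (x :: (l ++ [z])) = divDiff s f (l ++ [z]) - divDiff s f (x :: l) := by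
  have hzx : z - x ≠ 0 := sub_ne_zero.2 hxz.symm
  cases l with
  | nil =>
    simp only [List.nil_append, divDiff, List.getLast_singleton, hxz, ↓reduceIte,
      List.dropLast_singleton]
    field_simp
  | cons y l =>
    rw [List.cons_append, divDiff.eq_3]
    simp only [List.getLast_append_singleton, ← List.cons_append, List.dropLast_concat, hxz,
      ↓reduceIte]
    field_simp

theorem sub_mul_divDiff_pair (x z : ℝ) : (z - x) * divDiff s f [x, z] = f z - f x := by
  rcases eq_or_ne x z with rfl | hxz
  · simp
  · simpa using sub_mul_divDiff_cons_concat s f hxz []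

theorem divDiff_cons_replicate (x b : ℝ) (k : ℕ) :
    divDiff s f (x :: List.replicate k b) =
      divDiff s f (List.replicate (k + 1) b) +
        (x - b) * divDiff s f (x :: List.replicate (k + 1) b) := by
  rcases eq_or_ne x b with rfl | hxb
  · simp [List.replicate_succ]
  · have h := sub_mul_divDiff_cons_concat s f hxb (List.replicate k b)
    rw [← List.replicate_succ'] at h
    linear_combination h

theorem divDiff_cons_cons_replicate {a b : ℝ} (hab : a ≠ b) (x : ℝ) (m : ℕ) :
    divDiff s f (a :: x :: List.replicate m b) =
      divDiff s f (a :: List.replicate (m + 1) b) +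
        (x - b) * divDiff s f (a :: x :: List.replicate (m + 1) b) := by
  have hba : b - a ≠ 0 := sub_ne_zero.2 hab.symm
  induction m with
  | zero =>
    apply mul_left_cancel₀ hba
    have hx := sub_mul_divDiff_cons_concat s f hab [x]
    simp only [List.cons_append, List.nil_append] at hx
    simp only [zero_add, List.replicate_zero, List.replicate_one]
    linear_combination -(x - b) * hx + sub_mul_divDiff_pair s f a x -
      sub_mul_divDiff_pair s f a b + sub_mul_divDiff_pair s f x b
  | succ m ih =>
    apply mul_left_cancel₀ hba
    have hx := sub_mul_divDiff_cons_concat s f hab (x :: List.replicate (m + 1) b)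
    have hx₀ := sub_mul_divDiff_cons_concat s f hab (x :: List.replicate m b)
    have hb := sub_mul_divDiff_cons_concat s f hab (List.replicate (m + 1) b)
    simp only [List.cons_append, ← List.replicate_succ'] at hx hx₀ hb
    linear_combination hx₀ - hb - (x - b) * hx + divDiff_cons_replicate s f x b (m + 1) - ih

theorem hermite_expansion_divDiff {a b : ℝ} (hab : a ≠ b) (x : ℝ) (j : ℕ) :
    f x = f a + ∑ k ∈ Finset.Icc 1 j,
        divDiff s f (a :: List.replicate k b) * ((x - a) * (x - b) ^ (k - 1)) +
      (x - a) * (x - b) ^ j * divDiff s f (a :: x :: List.replicate j b) := by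
  induction j with
  | zero =>
    simp only [Finset.Icc_eq_empty_of_lt zero_lt_one, Finset.sum_empty, List.replicate_zero]
    linear_combination -sub_mul_divDiff_pair s f a x
  | succ j ih =>
    rw [Finset.sum_Icc_succ_top (Nat.le_add_left 1 j), Nat.add_sub_cancel]
    linear_combination ih + (x - a) * (x - b) ^ j * divDiff_cons_cons_replicate s f hab x j

end DividedDifferences

theorem lemma21_m_eq_one_general {E : Type*}
    (a b : ℝ) (hab : a < b) (n : ℕ) (hn : 2 ≤ n)
    (f : ℝ → ℝ)
    (A : (E → ℝ) →ₗ[ℝ] ℝ)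
    (hA1 : A (fun _ => (1 : ℝ)) = 1)
    (g : E → ℝ) :
    A (fun t => f (g t)) - (b - A g) / (b - a) * f a - (A g - a) / (b - a) * f b =
      (∑ k ∈ Finset.Icc 2 (n - 1),
        divDiff (Set.Icc a b) f (a :: List.replicate k b) *
          A (fun t => (g t - a) * (g t - b) ^ (k - 1))) +
      A (fun t => (g t - a) * (g t - b) ^ (n - 1) *
          divDiff (Set.Icc a b) f (a :: g t :: List.replicate (n - 1) b)) := by
  obtain ⟨j, rfl⟩ : ∃ j, n = j + 2 := ⟨n - 2, by omega⟩
  rw [show j + 2 - 1 = j + 1 from rfl]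
  have hslope := sub_mul_divDiff_pair (Set.Icc a b) f a b
  have hexpand : (fun t => f (g t)) =
      (f a - a * divDiff (Set.Icc a b) f [a, b]) • (fun _ => (1 : ℝ)) +
        divDiff (Set.Icc a b) f [a, b] • g +
        ∑ k ∈ Finset.Icc 2 (j + 1), divDiff (Set.Icc a b) f (a :: List.replicate k b) •
          (fun t => (g t - a) * (g t - b) ^ (k - 1)) +
        fun t => (g t - a) * (g t - b) ^ (j + 1) *
          divDiff (Set.Icc a b) f (a :: g t :: List.replicate (j + 1) b) := by
    funext t
    rw [hermite_expansion_divDiff (Set.Icc a b) f hab.ne (g t) (j + 1),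
      ← Finset.add_sum_Ioc_eq_sum_Icc (Nat.le_add_left 1 j), ← Finset.Icc_add_one_left_eq_Ioc]
    simp only [Pi.add_apply, Pi.smul_apply, Finset.sum_apply, smul_eq_mul, List.replicate_one,
      Nat.reduceAdd]
    ring
  have hba : b - a ≠ 0 := sub_ne_zero.2 hab.ne'
  rw [hexpand, map_add, map_add, map_add, map_smul, map_smul, map_sum, hA1]
  simp only [map_smul, smul_eq_mul]
  field_simp
  linear_combination (A g - a) * hslope

/-- Identity (2.3) of Lemma 2.1: the `(1, n-1)` Hermite expansion of the
Edmundson–Lah–Ribarič difference `LR(f,g,a,b,A)`. -/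
theorem lemma21_m_eq_one {E : Type*} [Nonempty E]
    (a b : ℝ) (hab : a < b) (n : ℕ) (hn : 2 ≤ n)
    (f : ℝ → ℝ) (hf : ContDiffOn ℝ n f (Set.Icc a b))
    (A : (E → ℝ) →ₗ[ℝ] ℝ)
    (hApos : ∀ h : E → ℝ, (∀ t, 0 ≤ h t) → 0 ≤ A h)
    (hA1 : A (fun _ => (1 : ℝ)) = 1)
    (g : E → ℝ) (hg : ∀ t, g t ∈ Set.Icc a b) :
    A (fun t => f (g t)) - (b - A g) / (b - a) * f a - (A g - a) / (b - a) * f b =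
      (∑ k ∈ Finset.Icc 2 (n - 1),
        divDiff (Set.Icc a b) f (a :: List.replicate k b) *
          A (fun t => (g t - a) * (g t - b) ^ (k - 1))) +
      A (fun t => (g t - a) * (g t - b) ^ (n - 1) *
          divDiff (Set.Icc a b) f (a :: g t :: List.replicate (n - 1) b)) :=
  lemma21_m_eq_one_general a b hab n hn f A hA1 g
end

section
/- Let A be a positive normalized linear functional on L, let f ∈ C^n([a,b]), let 3 ≤ m ≤ n−1, and let g ∈ L with f∘g ∈ L. Then LR(f,g,a,b,A) = (b−A(g))·(f[a,b] − f[b,b]) + Σ_{k=2}^{m-1} (f^{(k)}(b)/k!) · A[(g−b1)^k] + Σ_{k=1}^{n-m} f[b,…,b (m times); a,…,a (k times)] · A[(g−b1)^m (g−a1)^{k−1}] + A(R*_m(g)), where R*_m(t) = (t−b)^m (t−a)^{n−m} · f[t; b,…,b (m times); a,…,a ((n−m) times)]. -/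
/-!
Peeling one point off either end of a divided difference, `(q - p) f[p, L, q] = f[L, q] - f[p, L]`,
telescopes `f(x) = f[x]` first through the copies of `b` and then through the copies of `a`:
`f(x) = ∑_{j<m} f[b^{j+1}] (x-b)^j
  + (x-b)^m (∑_{k<K} f[a^{k+1}, b^m] (x-a)^k + (x-a)^K f[a^K, x, b^m])`.
The terms `j = 0, 1` combine with the linear interpolation of `f` at `a, b` into
`(b - x)(f[a,b] - f[b,b])`, and applying the linear functional `A` (with `A 1 = 1`) at `x = g t`
gives the identity.
-/

open List

namespace divDiff

variable (s : Set ℝ) (f : ℝ → ℝ)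

theorem singleton (x : ℝ) : divDiff s f [x] = f x := by rw [divDiff]

theorem replicate_add_two (b : ℝ) (j : ℕ) :
    divDiff s f (replicate (j + 2) b) = iteratedDerivWithin (j + 1) f s b / (j + 1).factorial := by
  rw [replicate_succ, replicate_succ, divDiff, if_pos]
  · simp
  · simp_rw [← replicate_succ, getLast_replicate]

theorem sub_mul_cons_concat {p q : ℝ} (hpq : p ≠ q) (L : List ℝ) :
    (q - p) * divDiff s f (p :: (L ++ [q])) = divDiff s f (L ++ [q]) - divDiff s f (p :: L) := by
  obtain ⟨y, l, hyl⟩ :=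
    exists_cons_of_ne_nil (append_ne_nil_of_right_ne_nil L (cons_ne_nil q []))
  have hlast : (y :: l).getLast (cons_ne_nil y l) = q := by simp_rw [← hyl]; simp
  have hdrop : (y :: l).dropLast = L := by rw [← hyl, dropLast_concat]
  rw [hyl, divDiff, if_neg (by rw [hlast]; exact hpq), hlast, hdrop]
  field_simp [sub_ne_zero.mpr hpq.symm]

theorem pair {a b : ℝ} (hab : a ≠ b) : divDiff s f [a, b] = (f b - f a) / (b - a) := by
  have := sub_mul_cons_concat s f hab []
  simp only [nil_append, singleton] at this
  field_simp [sub_ne_zero.mpr hab.symm]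
  linarith

end divDiff

noncomputable def divDiffAB (s : Set ℝ) (f : ℝ → ℝ) (a b : ℝ) (k m : ℕ) : ℝ :=
  divDiff s f (replicate k a ++ replicate m b)

noncomputable def divDiffAXB (s : Set ℝ) (f : ℝ → ℝ) (a b x : ℝ) (k m : ℕ) : ℝ :=
  divDiff s f (replicate k a ++ x :: replicate m b)

section Recurrences

variable (s : Set ℝ) (f : ℝ → ℝ) {a b : ℝ} (x : ℝ)

theorem divDiffAXB_succ_succ (hab : a ≠ b) (k m : ℕ) :
    (b - a) * divDiffAXB s f a b x (k + 1) (m + 1) =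
      divDiffAXB s f a b x k (m + 1) - divDiffAXB s f a b x (k + 1) m := by
  have h := divDiff.sub_mul_cons_concat s f hab (replicate k a ++ x :: replicate m b)
  simp only [cons_append, append_assoc, ← replicate_succ'] at h
  simpa [divDiffAXB, replicate_succ (n := k)] using h

theorem divDiffAB_succ_succ (hab : a ≠ b) (k m : ℕ) :
    (b - a) * divDiffAB s f a b (k + 1) (m + 1) =
      divDiffAB s f a b k (m + 1) - divDiffAB s f a b (k + 1) m := by
  have h := divDiff.sub_mul_cons_concat s f hab (replicate k a ++ replicate m b)
  simp only [append_assoc, ← replicate_succ'] at h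
  simpa [divDiffAB, replicate_succ (n := k)] using h

theorem divDiffAXB_zero_succ (hxb : x ≠ b) (m : ℕ) :
    (b - x) * divDiffAXB s f a b x 0 (m + 1) =
      divDiffAB s f a b 0 (m + 1) - divDiffAXB s f a b x 0 m := by
  have h := divDiff.sub_mul_cons_concat s f hxb (replicate m b)
  simp only [← replicate_succ'] at h
  simpa [divDiffAXB, divDiffAB] using h

theorem divDiffAXB_succ_zero (hax : a ≠ x) (k : ℕ) :
    (x - a) * divDiffAXB s f a b x (k + 1) 0 =
      divDiffAXB s f a b x k 0 - divDiffAB s f a b (k + 1) 0 := by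
  simpa [divDiffAXB, divDiffAB, replicate_succ, replicate_succ'] using
    divDiff.sub_mul_cons_concat s f hax (replicate k a)

theorem divDiffAXB_right_self (k m : ℕ) :
    divDiffAXB s f a b b k m = divDiffAB s f a b k (m + 1) := by
  rw [divDiffAXB, divDiffAB, replicate_succ]

theorem divDiffAXB_left_self (k m : ℕ) :
    divDiffAXB s f a b a k m = divDiffAB s f a b (k + 1) m := by
  rw [divDiffAXB, divDiffAB, replicate_succ', append_assoc, singleton_append]

/- The recursion of `divDiff` only strips the two end points, so removing the interior point `x`
together with an end point is proved by induction on the number of copies of `b` after `x`. -/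
theorem sub_mul_divDiffAXB_succ_right_of_left (hab : a ≠ b) (j : ℕ)
    (hleft : ∀ k, (x - a) * divDiffAXB s f a b x (k + 1) j =
      divDiffAXB s f a b x k j - divDiffAB s f a b (k + 1) j) (k : ℕ) :
    (b - x) * divDiffAXB s f a b x k (j + 1) =
      divDiffAB s f a b k (j + 1) - divDiffAXB s f a b x k j := by
  induction k with
  | zero =>
    rcases eq_or_ne x b with rfl | hxb
    · simp only [divDiffAXB_right_self]; ring
    · exact divDiffAXB_zero_succ s f x hxb j
  | succ k ih =>
    refine mul_left_cancel₀ (sub_ne_zero.mpr hab.symm) ?_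
    linear_combination (b - x) * divDiffAXB_succ_succ s f x hab k j + ih + hleft k -
      divDiffAB_succ_succ s f hab k j

theorem sub_mul_divDiffAXB_succ_left (hab : a ≠ b) (j k : ℕ) :
    (x - a) * divDiffAXB s f a b x (k + 1) j =
      divDiffAXB s f a b x k j - divDiffAB s f a b (k + 1) j := by
  induction j generalizing k with
  | zero =>
    rcases eq_or_ne a x with rfl | hax
    · simp only [divDiffAXB_left_self]; ring
    · exact divDiffAXB_succ_zero s f x hax k
  | succ j ih =>
    linear_combination divDiffAXB_succ_succ s f x hab k j -
      sub_mul_divDiffAXB_succ_right_of_left s f x hab j ih (k + 1)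

theorem sub_mul_divDiffAXB_succ_right (hab : a ≠ b) (j k : ℕ) :
    (b - x) * divDiffAXB s f a b x k (j + 1) =
      divDiffAB s f a b k (j + 1) - divDiffAXB s f a b x k j :=
  sub_mul_divDiffAXB_succ_right_of_left s f x hab j (sub_mul_divDiffAXB_succ_left s f x hab j) k

end Recurrences

section Expansion

variable (s : Set ℝ) (f : ℝ → ℝ) {a b : ℝ} (x : ℝ)

theorem eq_sum_add_divDiffAXB_zero (hab : a ≠ b) (J : ℕ) :
    f x = ∑ j ∈ Finset.range J, divDiffAB s f a b 0 (j + 1) * (x - b) ^ j +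
      (x - b) ^ J * divDiffAXB s f a b x 0 J := by
  induction J with
  | zero => simp [divDiffAXB, divDiff.singleton]
  | succ J ih =>
    rw [ih, Finset.sum_range_succ]
    linear_combination (x - b) ^ J * sub_mul_divDiffAXB_succ_right s f x hab J 0

theorem divDiffAXB_zero_eq_sum_add (hab : a ≠ b) (m K : ℕ) :
    divDiffAXB s f a b x 0 m = ∑ k ∈ Finset.range K, divDiffAB s f a b (k + 1) m * (x - a) ^ k +
      (x - a) ^ K * divDiffAXB s f a b x K m := by
  induction K with
  | zero => simp
  | succ K ih =>
    rw [ih, Finset.sum_range_succ]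
    linear_combination -(x - a) ^ K * sub_mul_divDiffAXB_succ_left s f x hab m K

theorem eq_linear_interp_add_hermite (hab : a ≠ b) {m : ℕ} (hm : 2 ≤ m) (K : ℕ) :
    f x = f a / (b - a) * (b - x) + f b / (b - a) * (x - a) +
      (divDiff s f [a, b] - divDiff s f [b, b]) * (b - x) +
      ∑ k ∈ Finset.Icc 2 (m - 1), iteratedDerivWithin k f s b / k.factorial * (x - b) ^ k +
      ∑ k ∈ Finset.Icc 1 K,
        divDiff s f (replicate k a ++ replicate m b) * ((x - b) ^ m * (x - a) ^ (k - 1)) +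
      (x - b) ^ m * (x - a) ^ K * divDiff s f (replicate K a ++ x :: replicate m b) := by
  obtain ⟨m, rfl⟩ := Nat.exists_eq_add_of_le' hm
  have hmiddle :
      ∑ k ∈ Finset.Icc 2 (m + 2 - 1), iteratedDerivWithin k f s b / k.factorial * (x - b) ^ k =
      ∑ j ∈ Finset.range m, divDiffAB s f a b 0 (j + 3) * (x - b) ^ (j + 2) := by
    rw [show m + 2 - 1 = m + 1 by omega, ← Finset.Ico_add_one_right_eq_Icc,
      Finset.sum_Ico_eq_sum_range, show m + 1 + 1 - 2 = m by omega]
    refine Finset.sum_congr rfl fun j _ => ?_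
    rw [divDiffAB, replicate_zero, nil_append, divDiff.replicate_add_two, add_comm 2 j]
  have htail : ∑ k ∈ Finset.Icc 1 K,
        divDiff s f (replicate k a ++ replicate (m + 2) b) *
          ((x - b) ^ (m + 2) * (x - a) ^ (k - 1)) =
      (x - b) ^ (m + 2) *
        ∑ k ∈ Finset.range K, divDiffAB s f a b (k + 1) (m + 2) * (x - a) ^ k := by
    rw [Finset.mul_sum, ← Finset.Ico_add_one_right_eq_Icc, Finset.sum_Ico_eq_sum_range,
      Nat.add_sub_cancel]
    refine Finset.sum_congr rfl fun k _ => ?_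
    rw [divDiffAB, add_comm 1 k, Nat.add_sub_cancel]
    ring
  have hb : divDiffAB s f a b 0 1 = f b := divDiff.singleton s f b
  have hbb : divDiffAB s f a b 0 2 = divDiff s f [b, b] := rfl
  rw [hmiddle, htail, divDiff.pair s f hab, eq_sum_add_divDiffAXB_zero s f x hab (m + 2),
    divDiffAXB_zero_eq_sum_add s f x hab (m + 2) K, Finset.sum_range_succ', Finset.sum_range_succ',
    hb, hbb]
  field_simp [sub_ne_zero.mpr hab.symm]
  simp only [divDiffAXB]
  ring

end Expansion

section LinearFunctional

variable {E : Type*} (A : (E → ℝ) →ₗ[ℝ] ℝ)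

theorem apply_fun_add (u v : E → ℝ) : A (fun t => u t + v t) = A u + A v := map_add A u v

theorem apply_fun_const_mul (c : ℝ) (u : E → ℝ) : A (fun t => c * u t) = c * A u :=
  map_smul A c u

theorem apply_fun_sum {ι : Type*} (S : Finset ι) (u : ι → E → ℝ) :
    A (fun t => ∑ i ∈ S, u i t) = ∑ i ∈ S, A (u i) := by
  rw [← map_sum]
  congr 1
  ext t
  simp

theorem apply_fun_const (hA1 : A (fun _ => (1 : ℝ)) = 1) (c : ℝ) : A (fun _ => c) = c := by
  simpa [hA1] using apply_fun_const_mul A c fun _ => 1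

theorem apply_fun_const_sub (hA1 : A (fun _ => (1 : ℝ)) = 1) (c : ℝ) (u : E → ℝ) :
    A (fun t => c - u t) = c - A u :=
  (map_sub A (fun _ => c) u).trans (by rw [apply_fun_const A hA1])

theorem apply_fun_sub_const (hA1 : A (fun _ => (1 : ℝ)) = 1) (c : ℝ) (u : E → ℝ) :
    A (fun t => u t - c) = A u - c :=
  (map_sub A u (fun _ => c)).trans (by rw [apply_fun_const A hA1])

end LinearFunctional

theorem lemma22_general_m_general {E : Type*}
    (a b : ℝ) (hab : a < b) (n m : ℕ) (hm : 3 ≤ m)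
    (f : ℝ → ℝ)
    (A : (E → ℝ) →ₗ[ℝ] ℝ)
    (hA1 : A (fun _ => (1 : ℝ)) = 1)
    (g : E → ℝ) :
    A (fun t => f (g t)) - (b - A g) / (b - a) * f a - (A g - a) / (b - a) * f b =
      (b - A g) * (divDiff (Set.Icc a b) f [a, b] - divDiff (Set.Icc a b) f [b, b]) +
      (∑ k ∈ Finset.Icc 2 (m - 1),
        iteratedDerivWithin k f (Set.Icc a b) b / Nat.factorial k *
          A (fun t => (g t - b) ^ k)) +
      (∑ k ∈ Finset.Icc 1 (n - m),
        divDiff (Set.Icc a b) f (List.replicate k a ++ List.replicate m b) *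
          A (fun t => (g t - b) ^ m * (g t - a) ^ (k - 1))) +
      A (fun t => (g t - b) ^ m * (g t - a) ^ (n - m) *
          divDiff (Set.Icc a b) f
            (List.replicate (n - m) a ++ g t :: List.replicate m b)) := by
  have hexp := congrArg A <| funext fun t =>
    eq_linear_interp_add_hermite (Set.Icc a b) f (g t) hab.ne (by omega : 2 ≤ m) (n - m)
  simp only [apply_fun_add, apply_fun_const_mul, apply_fun_sum, apply_fun_const_sub A hA1,
    apply_fun_sub_const A hA1] at hexp
  rw [hexp]
  ring

/-- Identity (2.10) of Lemma 2.2: the mirror `(m, n-m)` Hermite expansion of the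
Edmundson–Lah–Ribarič difference `LR(f,g,a,b,A)`, for `3 ≤ m ≤ n-1`. -/
theorem lemma22_general_m {E : Type*} [Nonempty E]
    (a b : ℝ) (hab : a < b) (n m : ℕ) (hm : 3 ≤ m) (hmn : m + 1 ≤ n)
    (f : ℝ → ℝ) (hf : ContDiffOn ℝ n f (Set.Icc a b))
    (A : (E → ℝ) →ₗ[ℝ] ℝ)
    (hApos : ∀ h : E → ℝ, (∀ t, 0 ≤ h t) → 0 ≤ A h)
    (hA1 : A (fun _ => (1 : ℝ)) = 1)
    (g : E → ℝ) (hg : ∀ t, g t ∈ Set.Icc a b) :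
    A (fun t => f (g t)) - (b - A g) / (b - a) * f a - (A g - a) / (b - a) * f b =
      (b - A g) * (divDiff (Set.Icc a b) f [a, b] - divDiff (Set.Icc a b) f [b, b]) +
      (∑ k ∈ Finset.Icc 2 (m - 1),
        iteratedDerivWithin k f (Set.Icc a b) b / Nat.factorial k *
          A (fun t => (g t - b) ^ k)) +
      (∑ k ∈ Finset.Icc 1 (n - m),
        divDiff (Set.Icc a b) f (List.replicate k a ++ List.replicate m b) *
          A (fun t => (g t - b) ^ m * (g t - a) ^ (k - 1))) +
      A (fun t => (g t - b) ^ m * (g t - a) ^ (n - m) *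
          divDiff (Set.Icc a b) f
            (List.replicate (n - m) a ++ g t :: List.replicate m b)) :=
  lemma22_general_m_general a b hab n m hm f A hA1 g
end

section
/- Let A be a positive normalized linear functional on L, let f ∈ C^n([a,b]) be n-convex, let 3 ≤ m ≤ n−1 with n and m of different parity, and let g ∈ L with f∘g ∈ L. Then LR(f,g,a,b,A) ≤ (A(g)−a)·(f[a,a] − f[a,b]) + Σ_{k=2}^{m-1} (f^{(k)}(a)/k!) · A[(g−a1)^k] + Σ_{k=1}^{n-m} f[a,…,a (m times); b,…,b (k times)] · A[(g−a1)^m (g−b1)^{k−1}]. If instead f is n-convex and n, m have equal parity, the inequality is reversed. -/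
open Set Polynomial List
open scoped Nat

theorem Polynomial.iteratedDerivWithin_eval {𝕜 : Type*} [NontriviallyNormedField 𝕜] (P : 𝕜[X])
    {s : Set 𝕜} (hs : UniqueDiffOn 𝕜 s) (k : ℕ) {x : 𝕜} (hx : x ∈ s) :
    iteratedDerivWithin k (fun y => P.eval y) s x = (derivative^[k] P).eval x := by
  induction k generalizing P with
  | zero => simp
  | succ k ih =>
    have hderiv : EqOn (derivWithin (fun y => P.eval y) s) (fun y => (derivative P).eval y) s :=
      fun y hy => P.derivWithin (hs y hy)
    rw [iteratedDerivWithin_succ', iteratedDerivWithin_congr hderiv hx, ih,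
      Function.iterate_succ_apply]

theorem iteratedDerivWithin_sub_eval {𝕜 : Type*} [NontriviallyNormedField 𝕜] {s : Set 𝕜}
    (hs : UniqueDiffOn 𝕜 s) {n j : ℕ} {f : 𝕜 → 𝕜} (hf : ContDiffOn 𝕜 n f s) (hj : j ≤ n)
    (P : 𝕜[X]) {y : 𝕜} (hy : y ∈ s) :
    iteratedDerivWithin j (fun x => f x - P.eval x) s y
      = iteratedDerivWithin j f s y - (derivative^[j] P).eval y := by
  have hP : ContDiffWithinAt 𝕜 j (fun x => P.eval x) s y := by
    simpa using (P.contDiff_aeval (𝕜 := 𝕜) j).contDiffWithinAt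
  rw [← P.iteratedDerivWithin_eval hs j hy]
  exact iteratedDerivWithin_sub hy hs ((hf.of_le (by exact_mod_cast hj)) y hy) hP

theorem Polynomial.Monic.iterate_derivative_natDegree {R : Type*} [CommSemiring R] {P : R[X]}
    (hP : P.Monic) : derivative^[P.natDegree] P = C (P.natDegree ! : R) := by
  ext m
  rw [coeff_iterate_derivative, coeff_C]
  rcases Nat.eq_zero_or_pos m with rfl | hm
  · simp [hP.coeff_natDegree, Nat.descFactorial_self]
  · rw [coeff_eq_zero_of_natDegree_lt (by omega), smul_zero, if_neg hm.ne']

theorem Polynomial.eval_iterate_derivative_eq_zero_of_pow_dvd {R : Type*} [CommRing R]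
    {P : R[X]} {t : R} {n k : ℕ} (hP : (X - C t) ^ n ∣ P) (hk : k < n) :
    (derivative^[k] P).eval t = 0 :=
  dvd_iff_isRoot.mp <| (dvd_pow_self _ (Nat.sub_ne_zero_of_lt hk)).trans
    (pow_sub_dvd_iterate_derivative_of_pow_dvd k hP)

theorem exists_finset_deriv_eq_zero {u : ℝ → ℝ} {a b : ℝ} (hu : ContinuousOn u (Icc a b))
    (Z : Finset ℝ) (hZ : ↑Z ⊆ Icc a b) (hZu : ∀ x ∈ Z, u x = 0) :
    ∃ T : Finset ℝ, ↑T ⊆ Ioo a b ∧ (∀ z ∈ T, deriv u z = 0) ∧ Z.card ≤ T.card + 1 := by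
  have hrolle : ∀ x ∈ Z, ∀ y ∈ Z, x < y → ∃ z ∈ Ioo x y, deriv u z = 0 := fun x hx y hy hxy =>
    exists_deriv_eq_zero hxy (hu.mono (Icc_subset_Icc (hZ hx).1 (hZ hy).2))
      ((hZu x hx).trans (hZu y hy).symm)
  choose! ζ hζ hζu using hrolle
  refine ⟨((Z ×ˢ Z).filter (fun p => p.1 < p.2)).image (fun p => ζ p.1 p.2), ?_, ?_, ?_⟩
  · intro z hz
    simp only [Finset.coe_image, Finset.coe_filter, Finset.mem_product, mem_image,
      mem_ofPred_eq] at hz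
    obtain ⟨⟨x, y⟩, ⟨⟨hx, hy⟩, hxy⟩, rfl⟩ := hz
    exact ⟨(hZ hx).1.trans_lt (hζ x hx y hy hxy).1, (hζ x hx y hy hxy).2.trans_le (hZ hy).2⟩
  · simp only [Finset.mem_image, Finset.mem_filter, Finset.mem_product]
    rintro _ ⟨⟨x, y⟩, ⟨⟨hx, hy⟩, hxy⟩, rfl⟩
    exact hζu x hx y hy hxy
  · refine Finset.card_le_of_interleaved fun x hx y hy hxy _ => ⟨ζ x y, ?_, hζ x hx y hy hxy⟩
    exact Finset.mem_image_of_mem (fun p : ℝ × ℝ => ζ p.1 p.2) (a := (x, y)) (by simp [hx, hy, hxy])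

theorem exists_finset_iteratedDerivWithin_succ_eq_zero {a b : ℝ} (hab : a < b) {n k : ℕ}
    {e : ℝ → ℝ} (he : ContDiffOn ℝ n e (Icc a b)) (hk : k < n)
    (T : Finset ℝ) (hT : ↑T ⊆ Ioo a b) (hTe : ∀ x ∈ T, iteratedDerivWithin k e (Icc a b) x = 0) :
    ∃ T' : Finset ℝ, ↑T' ⊆ Ioo a b ∧ (∀ x ∈ T', iteratedDerivWithin (k + 1) e (Icc a b) x = 0) ∧
      T.card + (if iteratedDerivWithin k e (Icc a b) a = 0 then 1 else 0) +
        (if iteratedDerivWithin k e (Icc a b) b = 0 then 1 else 0) ≤ T'.card + 1 := by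
  classical
  set u := iteratedDerivWithin k e (Icc a b)
  set F := ({a, b} : Finset ℝ).filter (fun x => u x = 0)
  have hTF : Disjoint T F := by
    refine Finset.disjoint_left.mpr fun x hxT hxF => ?_
    have hx := hT hxT
    rcases Finset.mem_insert.mp (Finset.mem_filter.mp hxF).1 with rfl | hxb
    · exact hx.1.false
    · rw [Finset.mem_singleton.mp hxb] at hx; exact hx.2.false
  have hu : ContinuousOn u (Icc a b) :=
    he.continuousOn_iteratedDerivWithin (by exact_mod_cast hk.le) (uniqueDiffOn_Icc hab)
  obtain ⟨T', hT', hT'u, hcard⟩ := exists_finset_deriv_eq_zero hu (T ∪ F) (by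
      rw [Finset.coe_union]
      refine union_subset (hT.trans Ioo_subset_Icc_self) fun x hx => ?_
      rcases Finset.mem_insert.mp (Finset.mem_filter.mp hx).1 with rfl | hxb
      · exact left_mem_Icc.mpr hab.le
      · rw [Finset.mem_singleton.mp hxb]; exact right_mem_Icc.mpr hab.le)
    (by
      intro x hx
      rcases Finset.mem_union.mp hx with hx | hx
      · exact hTe x hx
      · exact (Finset.mem_filter.mp hx).2)
  refine ⟨T', hT', fun x hx => ?_, ?_⟩
  · rw [iteratedDerivWithin_succ, derivWithin_of_mem_nhds (Icc_mem_nhds (hT' hx).1 (hT' hx).2)]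
    exact hT'u x hx
  · rwa [Finset.card_union_of_disjoint hTF, Finset.card_filter, Finset.sum_pair hab.ne,
      ← add_assoc] at hcard

theorem exists_iteratedDerivWithin_eq_zero_of_zeros {a b : ℝ} (hab : a < b) {n p q : ℕ}
    {e : ℝ → ℝ} (he : ContDiffOn ℝ n e (Icc a b))
    (ha : ∀ j < p, iteratedDerivWithin j e (Icc a b) a = 0)
    (hb : ∀ j < q, iteratedDerivWithin j e (Icc a b) b = 0)
    (S : Finset ℝ) (hS : ↑S ⊆ Ioo a b) (hSe : ∀ x ∈ S, e x = 0) (hcount : n + 1 ≤ p + S.card + q) :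
    ∃ ξ ∈ Icc a b, iteratedDerivWithin n e (Icc a b) ξ = 0 := by
  -- `e⁽ᵏ⁾` keeps `n + 1 - k` zeros counted with multiplicity: `p - k` at `a`, `q - k` at `b`,
  -- and those in `T`.
  have hzeros : ∀ k ≤ n, ∃ T : Finset ℝ, ↑T ⊆ Ioo a b ∧
      (∀ x ∈ T, iteratedDerivWithin k e (Icc a b) x = 0) ∧
      n + 1 ≤ k + (p - k) + T.card + (q - k) := by
    intro k hk
    induction k with
    | zero => exact ⟨S, hS, by simpa using hSe, by omega⟩
    | succ k ih =>
      obtain ⟨T, hT, hTe, hTcount⟩ := ih (by omega)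
      obtain ⟨T', hT', hT'e, hcard⟩ :=
        exists_finset_iteratedDerivWithin_succ_eq_zero hab he (by omega) T hT hTe
      refine ⟨T', hT', hT'e, ?_⟩
      split_ifs at hcard <;> grind
  obtain ⟨T, hT, hTe, hTcount⟩ := hzeros n le_rfl
  by_cases hpn : n < p
  · exact ⟨a, left_mem_Icc.mpr hab.le, ha n hpn⟩
  by_cases hqn : n < q
  · exact ⟨b, right_mem_Icc.mpr hab.le, hb n hqn⟩
  obtain ⟨ξ, hξ⟩ := Finset.card_pos.mp (by omega : 0 < T.card)
  exact ⟨ξ, Ioo_subset_Icc_self (hT hξ), hTe ξ hξ⟩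

theorem exists_eq_eval_add_hermite_remainder {a b : ℝ} (hab : a < b) {n p q : ℕ} (hp : 0 < p)
    (hq : 0 < q) (hpq : p + q = n) {f : ℝ → ℝ} (hf : ContDiffOn ℝ n f (Icc a b)) (Q : ℝ[X])
    (hQ : Q.natDegree < n)
    (hQa : ∀ j < p, (derivative^[j] Q).eval a = iteratedDerivWithin j f (Icc a b) a)
    (hQb : ∀ j < q, (derivative^[j] Q).eval b = iteratedDerivWithin j f (Icc a b) b)
    {x : ℝ} (hx : x ∈ Icc a b) :
    ∃ ξ ∈ Icc a b,
      f x = Q.eval x + iteratedDerivWithin n f (Icc a b) ξ / n ! * ((x - a) ^ p * (x - b) ^ q) := by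
  have hs : UniqueDiffOn ℝ (Icc a b) := uniqueDiffOn_Icc hab
  rcases hx.1.eq_or_lt with rfl | hax
  · exact ⟨_, hx, by simpa [zero_pow hp.ne'] using (hQa 0 hp).symm⟩
  rcases hx.2.eq_or_lt with rfl | hxb
  · exact ⟨_, hx, by simpa [zero_pow hq.ne'] using (hQb 0 hq).symm⟩
  set ρ : ℝ[X] := (X - C a) ^ p * (X - C b) ^ q
  have hρ : ρ.Monic := ((monic_X_sub_C a).pow p).mul ((monic_X_sub_C b).pow q)
  have hρdeg : ρ.natDegree = n := by
    rw [((monic_X_sub_C a).pow p).natDegree_mul ((monic_X_sub_C b).pow q)]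
    simp [hpq]
  have hρx : ρ.eval x = (x - a) ^ p * (x - b) ^ q := by simp [ρ]
  have hρx0 : ρ.eval x ≠ 0 := by
    rw [hρx]
    exact mul_ne_zero (pow_ne_zero _ (sub_pos.mpr hax).ne') (pow_ne_zero _ (sub_neg.mpr hxb).ne)
  -- `c` is chosen so that `f - (Q + c ρ)` also vanishes at `x`.
  set c := (f x - Q.eval x) / ρ.eval x
  set R := Q + C c * ρ
  have hR : ∀ j, derivative^[j] R = derivative^[j] Q + C c * derivative^[j] ρ := by
    intro j; simp [R, iterate_map_add, iterate_derivative_C_mul]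
  have he : ContDiffOn ℝ n (fun y => f y - R.eval y) (Icc a b) :=
    hf.sub (by simpa using (R.contDiff_aeval (𝕜 := ℝ) n).contDiffOn)
  obtain ⟨ξ, hξ, hξ0⟩ := exists_iteratedDerivWithin_eq_zero_of_zeros hab he (p := p) (q := q)
    (fun j hj => by
      rw [iteratedDerivWithin_sub_eval hs hf (by omega) R (left_mem_Icc.mpr hab.le), hR,
        eval_add, eval_mul, eval_iterate_derivative_eq_zero_of_pow_dvd (dvd_mul_right _ _) hj,
        hQa j hj]
      ring)
    (fun j hj => by
      rw [iteratedDerivWithin_sub_eval hs hf (by omega) R (right_mem_Icc.mpr hab.le), hR,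
        eval_add, eval_mul, eval_iterate_derivative_eq_zero_of_pow_dvd (dvd_mul_left _ _) hj,
        hQb j hj]
      ring)
    {x} (by simpa using ⟨hax, hxb⟩)
    (by
      simp only [Finset.mem_singleton, forall_eq, R, eval_add, eval_mul, eval_C, c]
      field_simp
      ring)
    (by simp; omega)
  rw [iteratedDerivWithin_sub_eval hs hf le_rfl R hξ, hR, iterate_derivative_eq_zero hQ, ← hρdeg,
    hρ.iterate_derivative_natDegree, hρdeg] at hξ0
  refine ⟨ξ, hξ, ?_⟩
  simp only [eval_mul, eval_C, zero_add] at hξ0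
  rw [sub_eq_zero.mp hξ0, mul_div_cancel_right₀ _ (by positivity), ← hρx, div_mul_cancel₀ _ hρx0]
  ring

theorem divDiff_replicate (s : Set ℝ) (f : ℝ → ℝ) (c : ℝ) (k : ℕ) :
    divDiff s f (replicate (k + 1) c) = iteratedDerivWithin k f s c / k ! := by
  rcases k with _ | k
  · simp [divDiff]
  · rw [replicate_succ, replicate_succ, divDiff, if_pos]
    · simp
    · exact (eq_of_mem_replicate (n := k + 1) (getLast_mem _)).symm

theorem divDiff_replicate_append_replicate (s : Set ℝ) (f : ℝ → ℝ) {a b : ℝ} (hab : a ≠ b)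
    (p q : ℕ) :
    (b - a) * divDiff s f (replicate (p + 1) a ++ replicate (q + 1) b)
      = divDiff s f (replicate p a ++ replicate (q + 1) b)
        - divDiff s f (replicate (p + 1) a ++ replicate q b) := by
  obtain ⟨y, l, hyl⟩ := exists_cons_of_ne_nil
    (by simp : replicate p a ++ replicate (q + 1) b ≠ [])
  have hlast : (y :: l).getLast (cons_ne_nil y l) = b := by
    simp_rw [← hyl]; simp
  have hdrop : (y :: l).dropLast = replicate p a ++ replicate q b := by
    rw [← hyl, replicate_succ', ← append_assoc, dropLast_concat]
  rw [replicate_succ, cons_append, hyl, divDiff, if_neg (by rw [hlast]; exact hab), hlast, hdrop,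
    mul_div_cancel₀ _ (sub_ne_zero.mpr hab.symm), ← hyl, replicate_succ, cons_append]

section twoPointNewton

variable {R : Type*} [CommRing R] (a b : R) (D : ℕ → ℕ → R)

/-- `D i k` stands for the divided difference `f[a, …, a (i times), b, …, b (k times)]`. -/
noncomputable def twoPointNewton (p q : ℕ) : R[X] :=
  ∑ j ∈ Finset.range p, C (D (j + 1) 0) * (X - C a) ^ j +
    (X - C a) ^ p * ∑ k ∈ Finset.range q, C (D p (k + 1)) * (X - C b) ^ k

theorem twoPointNewton_succ_right (p q : ℕ) :
    twoPointNewton a b D p (q + 1)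
      = twoPointNewton a b D p q + C (D p (q + 1)) * ((X - C a) ^ p * (X - C b) ^ q) := by
  simp only [twoPointNewton, Finset.sum_range_succ]
  ring

/-- With the divided-difference recursion `hD`, the Newton form is symmetric in the two nodes. -/
theorem twoPointNewton_swap (hD : ∀ p q, (b - a) * D (p + 1) (q + 1) = D p (q + 1) - D (p + 1) q)
    (p q : ℕ) : twoPointNewton a b D p q = twoPointNewton b a (fun k j => D j k) q p := by
  induction p generalizing q with
  | zero => simp [twoPointNewton]
  | succ p ihp =>
    induction q with
    | zero => simp [twoPointNewton]
    | succ q ihq =>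
      have hC := congrArg C (hD p q)
      simp only [map_mul, map_sub] at hC
      rw [twoPointNewton_succ_right, ihq, twoPointNewton_succ_right, twoPointNewton_succ_right,
        ← ihp, ← ihp, twoPointNewton_succ_right]
      linear_combination (X - C a) ^ p * (X - C b) ^ q * hC

theorem eval_iterate_derivative_twoPointNewton_left {p j : ℕ} (q : ℕ) (hj : j < p) :
    (derivative^[j] (twoPointNewton a b D p q)).eval a = j ! * D (j + 1) 0 := by
  rw [twoPointNewton, iterate_map_add, eval_add,
    eval_iterate_derivative_eq_zero_of_pow_dvd (dvd_mul_right _ _) hj, add_zero,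
    iterate_derivative_sum, eval_finsetSum, Finset.sum_eq_single j]
  · simp [iterate_derivative_C_mul, iterate_derivative_X_sub_pow_self, mul_comm]
  · intro i _ hij
    rw [iterate_derivative_C_mul, iterate_derivative_X_sub_pow]
    rcases hij.lt_or_gt with hij | hij
    · simp [Nat.descFactorial_eq_zero_iff_lt.mpr hij]
    · simp [Nat.sub_ne_zero_of_lt hij]
  · simp_all

theorem natDegree_twoPointNewton_lt (p : ℕ) {q : ℕ} (hq : 0 < q) :
    (twoPointNewton a b D p q).natDegree < p + q := by
  have hpow : ∀ (c : R) (i : ℕ), ((X - C c) ^ i).natDegree ≤ i := fun c i =>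
    (natDegree_pow_le_of_le i (natDegree_X_sub_C_le c)).trans (mul_one i).le
  refine Nat.lt_of_le_sub_one (by omega) <| (natDegree_add_le _ _).trans (max_le ?_ ?_)
  · refine natDegree_sum_le_of_forall_le _ _ fun i hi => (natDegree_C_mul_le _ _).trans ?_
    exact (hpow a i).trans (by simp at hi; omega)
  · refine natDegree_mul_le.trans ?_
    have hsum : (∑ k ∈ Finset.range q, C (D p (k + 1)) * (X - C b) ^ k).natDegree ≤ q - 1 :=
      natDegree_sum_le_of_forall_le _ _ fun k hk =>
        (natDegree_C_mul_le _ _).trans ((hpow b k).trans (by simp at hk; omega))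
    have := hpow a p
    omega

end twoPointNewton

theorem neg_one_pow_mul_sub_eval_nonneg {a b : ℝ} (hab : a < b) {n p q : ℕ} (hp : 0 < p)
    (hq : 0 < q) (hpq : p + q = n) {f : ℝ → ℝ} (hf : ContDiffOn ℝ n f (Icc a b))
    (hconv : ∀ x ∈ Icc a b, 0 ≤ iteratedDerivWithin n f (Icc a b) x) (Q : ℝ[X])
    (hQ : Q.natDegree < n)
    (hQa : ∀ j < p, (derivative^[j] Q).eval a = iteratedDerivWithin j f (Icc a b) a)
    (hQb : ∀ j < q, (derivative^[j] Q).eval b = iteratedDerivWithin j f (Icc a b) b)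
    {x : ℝ} (hx : x ∈ Icc a b) :
    0 ≤ (-1) ^ q * (f x - Q.eval x) := by
  obtain ⟨ξ, hξ, hfx⟩ := exists_eq_eval_add_hermite_remainder hab hp hq hpq hf Q hQ hQa hQb hx
  have hxa : 0 ≤ x - a := sub_nonneg.mpr hx.1
  have hbx : 0 ≤ b - x := sub_nonneg.mpr hx.2
  have hξn := hconv ξ hξ
  calc 0 ≤ iteratedDerivWithin n f (Icc a b) ξ / n ! * ((x - a) ^ p * (b - x) ^ q) := by positivity
    _ = (-1) ^ q * (f x - Q.eval x) := by
      rw [hfx, add_sub_cancel_left, show b - x = -1 * (x - b) by ring, mul_pow]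
      ring

noncomputable def hermiteNewton (s : Set ℝ) (f : ℝ → ℝ) (a b : ℝ) (p q : ℕ) : ℝ[X] :=
  twoPointNewton a b (fun i k => divDiff s f (replicate i a ++ replicate k b)) p q

theorem eval_iterate_derivative_hermiteNewton_left (s : Set ℝ) (f : ℝ → ℝ) (a b : ℝ) {p j : ℕ}
    (q : ℕ) (hj : j < p) :
    (derivative^[j] (hermiteNewton s f a b p q)).eval a = iteratedDerivWithin j f s a := by
  rw [hermiteNewton, eval_iterate_derivative_twoPointNewton_left _ _ _ q hj, replicate_zero,
    append_nil, divDiff_replicate, mul_div_cancel₀ _ (by positivity)]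

theorem eval_iterate_derivative_hermiteNewton_right (s : Set ℝ) (f : ℝ → ℝ) {a b : ℝ}
    (hab : a ≠ b) (p : ℕ) {q j : ℕ} (hj : j < q) :
    (derivative^[j] (hermiteNewton s f a b p q)).eval b = iteratedDerivWithin j f s b := by
  rw [hermiteNewton, twoPointNewton_swap _ _ _ (divDiff_replicate_append_replicate s f hab),
    eval_iterate_derivative_twoPointNewton_left _ _ _ p hj, replicate_zero, nil_append,
    divDiff_replicate, mul_div_cancel₀ _ (by positivity)]

theorem apply_eval_twoPointNewton_comp {E : Type*} (A : (E → ℝ) →ₗ[ℝ] ℝ) (a b : ℝ)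
    (D : ℕ → ℕ → ℝ) (p q : ℕ) (g : E → ℝ) :
    A (fun t => (twoPointNewton a b D p q).eval (g t))
      = ∑ j ∈ Finset.range p, D (j + 1) 0 * A (fun t => (g t - a) ^ j)
        + ∑ k ∈ Finset.range q, D p (k + 1) * A (fun t => (g t - a) ^ p * (g t - b) ^ k) := by
  have hfun : (fun t => (twoPointNewton a b D p q).eval (g t))
      = ∑ j ∈ Finset.range p, D (j + 1) 0 • (fun t => (g t - a) ^ j)
        + ∑ k ∈ Finset.range q, D p (k + 1) • (fun t => (g t - a) ^ p * (g t - b) ^ k) := by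
    ext t
    simp [twoPointNewton, eval_finsetSum, Finset.sum_apply, Finset.mul_sum, mul_left_comm]
  simp [hfun, map_sum]

theorem apply_le_apply_of_le {E : Type*} (A : (E → ℝ) →ₗ[ℝ] ℝ)
    (hA : ∀ h : E → ℝ, (∀ t, 0 ≤ h t) → 0 ≤ A h) {u v : E → ℝ} (huv : ∀ t, u t ≤ v t) :
    A u ≤ A v := by
  simpa [map_sub] using hA (v - u) fun t => sub_nonneg.mpr (huv t)

theorem apply_hermiteNewton_comp_sub_chord {E : Type*} (A : (E → ℝ) →ₗ[ℝ] ℝ)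
    (hA1 : A (fun _ => (1 : ℝ)) = 1) (g : E → ℝ) (s : Set ℝ) (f : ℝ → ℝ) {a b : ℝ} (hab : a ≠ b)
    {m : ℕ} (hm : 2 ≤ m) (q : ℕ) :
    A (fun t => (hermiteNewton s f a b m q).eval (g t))
        - (b - A g) / (b - a) * f a - (A g - a) / (b - a) * f b
      = (A g - a) * (divDiff s f [a, a] - divDiff s f [a, b])
        + ∑ k ∈ Finset.Icc 2 (m - 1), iteratedDerivWithin k f s a / k ! * A (fun t => (g t - a) ^ k)
        + ∑ k ∈ Finset.Icc 1 q, divDiff s f (replicate m a ++ replicate k b)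
            * A (fun t => (g t - a) ^ m * (g t - b) ^ (k - 1)) := by
  obtain ⟨m, rfl⟩ : ∃ m', m = m' + 2 := ⟨m - 2, by omega⟩
  have hA0 : A (fun t => (g t - a) ^ 0) = 1 := by simpa using hA1
  have hA1' : A (fun t => (g t - a) ^ (0 + 1)) = A g - a := by
    have : (fun t => (g t - a) ^ (0 + 1)) = g - a • fun _ => (1 : ℝ) := by ext; simp
    rw [this, map_sub, map_smul, hA1, smul_eq_mul, mul_one]
  have hTaylor : ∀ j, divDiff s f (replicate (j + 1) a ++ replicate 0 b)
      = iteratedDerivWithin j f s a / j ! := fun j => by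
    rw [replicate_zero, append_nil, divDiff_replicate]
  have haa : divDiff s f [a, a] = iteratedDerivWithin 1 f s a := by
    simpa using divDiff_replicate s f a 1
  have hab' : divDiff s f [a, b] = (f b - f a) / (b - a) := by
    rw [eq_div_iff (sub_ne_zero.mpr hab.symm), mul_comm]
    simpa [divDiff] using divDiff_replicate_append_replicate s f hab 0 0
  have hshift2 (F : ℕ → ℝ) :
      ∑ k ∈ Finset.Icc 2 (m + 2 - 1), F k = ∑ k ∈ Finset.range m, F (k + 2) := by
    rw [show Finset.Icc 2 (m + 2 - 1) = Finset.Ico 2 (m + 2) by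
        ext; simp only [Finset.mem_Icc, Finset.mem_Ico]; omega,
      Finset.sum_Ico_eq_sum_range]
    simp [add_comm]
  have hshift1 (F : ℕ → ℝ) : ∑ k ∈ Finset.Icc 1 q, F k = ∑ k ∈ Finset.range q, F (k + 1) := by
    rw [show Finset.Icc 1 q = Finset.Ico 1 (q + 1) by
        ext; simp only [Finset.mem_Icc, Finset.mem_Ico]; omega,
      Finset.sum_Ico_eq_sum_range]
    simp [add_comm]
  rw [hermiteNewton, apply_eval_twoPointNewton_comp, Finset.sum_range_succ',
    Finset.sum_range_succ', hA0, hA1', hshift2, hshift1, haa, hab']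
  simp only [hTaylor, add_assoc, Nat.reduceAdd, Nat.add_sub_cancel, iteratedDerivWithin_zero,
    Nat.factorial_zero, Nat.factorial_one, Nat.cast_one, div_one]
  field_simp
  ring

theorem thm21_general {E : Type*}
    (a b : ℝ) (hab : a < b) (n m : ℕ) (hm : 3 ≤ m) (hmn : m + 1 ≤ n)
    (f : ℝ → ℝ) (hf : ContDiffOn ℝ n f (Set.Icc a b))
    (hconv : ∀ x ∈ Set.Icc a b, 0 ≤ iteratedDerivWithin n f (Set.Icc a b) x)
    (A : (E → ℝ) →ₗ[ℝ] ℝ)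
    (hApos : ∀ h : E → ℝ, (∀ t, 0 ≤ h t) → 0 ≤ A h)
    (hA1 : A (fun _ => (1 : ℝ)) = 1)
    (g : E → ℝ) (hg : ∀ t, g t ∈ Set.Icc a b) :
    (¬ n % 2 = m % 2 →
      A (fun t => f (g t)) - (b - A g) / (b - a) * f a - (A g - a) / (b - a) * f b ≤
        (A g - a) * (divDiff (Set.Icc a b) f [a, a] - divDiff (Set.Icc a b) f [a, b]) +
        (∑ k ∈ Finset.Icc 2 (m - 1),
          iteratedDerivWithin k f (Set.Icc a b) a / Nat.factorial k *
            A (fun t => (g t - a) ^ k)) +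
        ∑ k ∈ Finset.Icc 1 (n - m),
          divDiff (Set.Icc a b) f (List.replicate m a ++ List.replicate k b) *
            A (fun t => (g t - a) ^ m * (g t - b) ^ (k - 1))) ∧
    (n % 2 = m % 2 →
      (A g - a) * (divDiff (Set.Icc a b) f [a, a] - divDiff (Set.Icc a b) f [a, b]) +
        (∑ k ∈ Finset.Icc 2 (m - 1),
          iteratedDerivWithin k f (Set.Icc a b) a / Nat.factorial k *
            A (fun t => (g t - a) ^ k)) +
        (∑ k ∈ Finset.Icc 1 (n - m),
          divDiff (Set.Icc a b) f (List.replicate m a ++ List.replicate k b) *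
            A (fun t => (g t - a) ^ m * (g t - b) ^ (k - 1))) ≤
      A (fun t => f (g t)) - (b - A g) / (b - a) * f a - (A g - a) / (b - a) * f b) := by
  set q := n - m with hq_def
  have hmq : m + q = n := by omega
  set Q := hermiteNewton (Icc a b) f a b m q
  have hsign : ∀ x ∈ Icc a b, 0 ≤ (-1) ^ q * (f x - Q.eval x) :=
    fun x hx => neg_one_pow_mul_sub_eval_nonneg hab (by omega) (by omega) hmq hf hconv Q
      (hmq ▸ natDegree_twoPointNewton_lt a b _ m (by omega))
      (fun j hj => eval_iterate_derivative_hermiteNewton_left _ f a b q hj)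
      (fun j hj => eval_iterate_derivative_hermiteNewton_right _ f hab.ne m hj) hx
  rw [← apply_hermiteNewton_comp_sub_chord A hA1 g (Icc a b) f hab.ne (by omega : 2 ≤ m) q]
  refine ⟨fun hpar => ?_, fun hpar => ?_⟩
  · have hq : Odd q := Nat.odd_iff.mpr (by omega)
    gcongr
    exact apply_le_apply_of_le A hApos fun t => by
      simpa [hq.neg_one_pow] using hsign (g t) (hg t)
  · have hq : Even q := Nat.even_iff.mpr (by omega)
    gcongr
    exact apply_le_apply_of_le A hApos fun t => by
      simpa [hq.neg_one_pow] using hsign (g t) (hg t)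

/-- Theorem 2.1: Edmundson–Lah–Ribarič type upper bound for `n`-convex functions,
`3 ≤ m ≤ n-1`; the inequality holds when `n` and `m` have different parity and is
reversed when they have equal parity. -/
theorem thm21 {E : Type*} [Nonempty E]
    (a b : ℝ) (hab : a < b) (n m : ℕ) (hm : 3 ≤ m) (hmn : m + 1 ≤ n)
    (f : ℝ → ℝ) (hf : ContDiffOn ℝ n f (Set.Icc a b))
    (hconv : ∀ x ∈ Set.Icc a b, 0 ≤ iteratedDerivWithin n f (Set.Icc a b) x)
    (A : (E → ℝ) →ₗ[ℝ] ℝ)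
    (hApos : ∀ h : E → ℝ, (∀ t, 0 ≤ h t) → 0 ≤ A h)
    (hA1 : A (fun _ => (1 : ℝ)) = 1)
    (g : E → ℝ) (hg : ∀ t, g t ∈ Set.Icc a b) :
    (¬ n % 2 = m % 2 →
      A (fun t => f (g t)) - (b - A g) / (b - a) * f a - (A g - a) / (b - a) * f b ≤
        (A g - a) * (divDiff (Set.Icc a b) f [a, a] - divDiff (Set.Icc a b) f [a, b]) +
        (∑ k ∈ Finset.Icc 2 (m - 1),
          iteratedDerivWithin k f (Set.Icc a b) a / Nat.factorial k *
            A (fun t => (g t - a) ^ k)) +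
        ∑ k ∈ Finset.Icc 1 (n - m),
          divDiff (Set.Icc a b) f (List.replicate m a ++ List.replicate k b) *
            A (fun t => (g t - a) ^ m * (g t - b) ^ (k - 1))) ∧
    (n % 2 = m % 2 →
      (A g - a) * (divDiff (Set.Icc a b) f [a, a] - divDiff (Set.Icc a b) f [a, b]) +
        (∑ k ∈ Finset.Icc 2 (m - 1),
          iteratedDerivWithin k f (Set.Icc a b) a / Nat.factorial k *
            A (fun t => (g t - a) ^ k)) +
        (∑ k ∈ Finset.Icc 1 (n - m),
          divDiff (Set.Icc a b) f (List.replicate m a ++ List.replicate k b) *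
            A (fun t => (g t - a) ^ m * (g t - b) ^ (k - 1))) ≤
      A (fun t => f (g t)) - (b - A g) / (b - a) * f a - (A g - a) / (b - a) * f b) :=
  thm21_general a b hab n m hm hmn f hf hconv A hApos hA1 g hg
end
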